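/- arXiv:math/0206028 — 7 statements merged into one kernel-verified Lean document; each statement's English description precedes it below -/
import Mathlib

section
/- The Zorn vector matrix algebra over a commutative ring is alternative: for all X, Y one has (XX)Y = X(XY) and (XY)Y = X(YY). -/
open Matrix

abbrev Zorn (R : Type*) [CommRing R] : Type _ := (R × (Fin 3 → R)) × ((Fin 3 → R) × R)

variable {R : Type*} [CommRing R]

def zmul (X Y : Zorn R) : Zorn R :=
  ((X.1.1 * Y.1.1 + X.1.2 ⬝ᵥ Y.2.1,
    X.1.1 • Y.1.2 + Y.2.2 • X.1.2 - crossProduct X.2.1 Y.2.1),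
   (Y.1.1 • X.2.1 + X.2.2 • Y.2.1 + crossProduct X.1.2 Y.1.2,
    X.2.2 * Y.2.2 + X.2.1 ⬝ᵥ Y.1.2))

def zornOne : Zorn R := ((1, 0), (0, 1))
def zA : Zorn R := ((1, 0), (0, 0))
def zB : Zorn R := ((0, 0), (0, 1))
def zC (i : Fin 3) : Zorn R := ((0, Pi.single i 1), (0, 0))
def zD (i : Fin 3) : Zorn R := ((0, 0), (Pi.single i 1, 0))

def IsZornDeriv (d : Zorn R →ₗ[R] Zorn R) : Prop :=
  ∀ X Y : Zorn R, d (zmul X Y) = zmul (d X) Y + zmul X (d Y)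

set_option maxHeartbeats 2000000 in
theorem zorn_alternative {R : Type*} [CommRing R] (X Y : Zorn R) :
    zmul (zmul X X) Y = zmul X (zmul X Y) ∧ zmul (zmul X Y) Y = zmul X (zmul Y Y) := by
  obtain ⟨⟨a, x⟩, y, b⟩ := X
  obtain ⟨⟨c, z⟩, t, d⟩ := Y
  simp only [zmul, crossProduct, dotProduct, Fin.sum_univ_three, Prod.mk.injEq,
    LinearMap.mk₂_apply, Prod.ext_iff]
  refine ⟨⟨⟨?_, ?_⟩, ?_, ?_⟩, ⟨?_, ?_⟩, ?_, ?_⟩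
  all_goals try (funext i; fin_cases i)
  all_goals simp [Matrix.vecHead, Matrix.vecTail, Function.comp, Pi.add_apply, Pi.sub_apply,
    Pi.smul_apply, smul_eq_mul, Fin.isValue]
  all_goals ring
end

section
/- If d is a derivation of the Zorn algebra and C = ((0,x),(0,0)) with C² = 0, then writing d(C) = ((a,u),(v,b)) one has a + b = 0 whenever x ≠ 0 is a standard basis vector; more precisely, for C_i = ((0,e_i),(0,0)), d(C_i) has diagonal entries (a_i, −a_i) and the i-th coordinate of its lower-left vector is zero. -/
open Matrix

variable {R : Type*} [CommRing R]

theorem deriv_C_diagonal {F : Type*} [Field F] (d : Zorn F →ₗ[F] Zorn F)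
    (hd : IsZornDeriv d) (i : Fin 3) :
    (d (zC i)).2.2 = -(d (zC i)).1.1 ∧ (d (zC i)).2.1 i = 0 := by
  have h0 : zmul (zC i) (zC i) = (0 : Zorn F) := by
    simp [zmul, zC, cross_self]
  have h := hd (zC i) (zC i)
  rw [h0, map_zero] at h
  constructor
  · have h1 := congrArg (fun z : Zorn F => z.1.2 i) h
    simp [zmul, zC, cross_anticomm] at h1
    simp only [zC]
    linear_combination -h1
  · have h2 := congrArg (fun z : Zorn F => z.2.2) h
    simpa [zmul, zC, dotProduct, Pi.single_apply] using h2.symm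
end

section
/- The Lie algebra of derivations of the split octonions (Zorn algebra) over a field of characteristic not 2 or 3 has dimension exactly 14. -/
/-!
A derivation `d` kills `1`, so by `zB = 1 - zA` and `zC (k + 1) * zC (k + 2) = zD k` it is
determined by its values on the idempotent `zA` and on the `zC j`. The Peirce relations of `zA`
force `d zA = ((0, u), (v, 0))` and express `d (zC j)` through `u`, `v` and the matrix `A` whose
columns are the `zC`-parts of the `d (zC j)`; evaluating `d` on `zC 0 * zC 1 = zD 2` and
`zC 2 * zD 2 = zA` gives `tr A = 0`. Conversely every `(A, u, v)` with `tr A = 0` defines a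
derivation, so `Der ≅ 𝔰𝔩₃ × R³ × R³` (the decomposition `𝔤₂ = 𝔰𝔩₃ ⊕ V ⊕ V*`), and the
dimension is `8 + 3 + 3 = 14`.
-/

open Matrix

variable {R : Type*} [CommRing R]

lemma zmul_add_left (a b Y : Zorn R) : zmul (a + b) Y = zmul a Y + zmul b Y := by
  refine Prod.ext (Prod.ext ?_ ?_) (Prod.ext ?_ ?_) <;>
    simp only [zmul, Prod.fst_add, Prod.snd_add, Pi.add_apply,
      add_dotProduct, dotProduct_add, add_mul, mul_add,
      add_smul, smul_add, map_add, LinearMap.add_apply] <;> abel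

lemma zmul_add_right (X a b : Zorn R) : zmul X (a + b) = zmul X a + zmul X b := by
  refine Prod.ext (Prod.ext ?_ ?_) (Prod.ext ?_ ?_) <;>
    simp only [zmul, Prod.fst_add, Prod.snd_add, Pi.add_apply,
      add_dotProduct, dotProduct_add, add_mul, mul_add,
      add_smul, smul_add, map_add, LinearMap.add_apply] <;> abel

lemma zmul_smul_left (c : R) (a Y : Zorn R) : zmul (c • a) Y = c • zmul a Y := by
  refine Prod.ext (Prod.ext ?_ ?_) (Prod.ext ?_ ?_) <;>
    simp only [zmul, Prod.smul_fst, Prod.smul_snd,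
      smul_dotProduct, dotProduct_smul, smul_eq_mul,
      _root_.map_smul, LinearMap.smul_apply] <;>
    first | ring1 | module

lemma zmul_smul_right (c : R) (X a : Zorn R) : zmul X (c • a) = c • zmul X a := by
  refine Prod.ext (Prod.ext ?_ ?_) (Prod.ext ?_ ?_) <;>
    simp only [zmul, Prod.smul_fst, Prod.smul_snd,
      smul_dotProduct, dotProduct_smul, smul_eq_mul,
      _root_.map_smul, LinearMap.smul_apply] <;>
    first | ring1 | module

def ZornDer (R : Type*) [CommRing R] : Submodule R (Zorn R →ₗ[R] Zorn R) where
  carrier := {d | IsZornDeriv d}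
  zero_mem' := by intro X Y; simp [IsZornDeriv, zmul]; rfl
  add_mem' := by
    intro d₁ d₂ h₁ h₂ X Y
    simp only [LinearMap.add_apply, h₁ X Y, h₂ X Y, zmul_add_left, zmul_add_right]
    abel
  smul_mem' := by
    intro c d h X Y
    simp only [LinearMap.smul_apply, h X Y, zmul_smul_left, zmul_smul_right, smul_add]

def zornDerOf (A : Matrix (Fin 3) (Fin 3) R) (u v : Fin 3 → R) : Zorn R →ₗ[R] Zorn R where
  toFun X :=
    ((-(v ⬝ᵥ X.1.2) - u ⬝ᵥ X.2.1, (X.1.1 - X.2.2) • u + A *ᵥ X.1.2 + v ⨯₃ X.2.1),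
     ((X.1.1 - X.2.2) • v + u ⨯₃ X.1.2 - X.2.1 ᵥ* A, v ⬝ᵥ X.1.2 + u ⬝ᵥ X.2.1))
  map_add' X Y := by
    simp only [Prod.fst_add, Prod.snd_add, dotProduct_add, mulVec_add, add_vecMul, map_add,
      Prod.mk_add_mk]
    congr 2 <;> module
  map_smul' c X := by
    simp only [Prod.smul_fst, Prod.smul_snd, dotProduct_smul, mulVec_smul, smul_vecMul,
      _root_.map_smul, RingHom.id_apply, Prod.smul_mk]
    congr 2 <;> module

def derMatrix (d : Zorn R →ₗ[R] Zorn R) : Matrix (Fin 3) (Fin 3) R :=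
  Matrix.of fun i j => (d (zC j)).1.2 i

lemma isZornDeriv_zornDerOf {A : Matrix (Fin 3) (Fin 3) R} (hA : A.trace = 0)
    (u v : Fin 3 → R) :
    IsZornDeriv (zornDerOf A u v) := by
  have h22 : A 2 2 = -(A 0 0 + A 1 1) := by
    rw [trace_fin_three] at hA; linear_combination hA
  intro X Y
  refine Prod.ext (Prod.ext ?_ ?_) (Prod.ext ?_ ?_)
  all_goals try (funext i; fin_cases i)
  all_goals
    simp only [zornDerOf, zmul, LinearMap.coe_mk, AddHom.coe_mk, Prod.fst_add, Prod.snd_add,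
      cross_apply, dotProduct, mulVec, vecMul, Fin.sum_univ_three, Pi.add_apply, Pi.sub_apply,
      Pi.smul_apply, smul_eq_mul, cons_val_zero, cons_val_one, cons_val_two, head_cons, tail_cons,
      Fin.zero_eta, Fin.mk_one, Fin.reduceFinMk, h22]
    ring

lemma zornDerOf_zA (A : Matrix (Fin 3) (Fin 3) R) (u v : Fin 3 → R) :
    zornDerOf A u v zA = ((0, u), (v, 0)) := by
  simp [zornDerOf, zA]

lemma zornDerOf_zC (A : Matrix (Fin 3) (Fin 3) R) (u v : Fin 3 → R) (j : Fin 3) :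
    zornDerOf A u v (zC j) = ((-v j, A.col j), (u ⨯₃ Pi.single j 1, v j)) := by
  simp [zornDerOf, zC]

lemma zornDerOf_add (A B : Matrix (Fin 3) (Fin 3) R) (u u' v v' : Fin 3 → R) :
    zornDerOf (A + B) (u + u') (v + v') = zornDerOf A u v + zornDerOf B u' v' := by
  refine LinearMap.ext fun X => ?_
  simp only [zornDerOf, LinearMap.coe_mk, AddHom.coe_mk, LinearMap.add_apply, Prod.mk_add_mk,
    add_dotProduct, add_mulVec, vecMul_add, map_add]
  congr 2 <;> module

lemma zornDerOf_smul (c : R) (A : Matrix (Fin 3) (Fin 3) R) (u v : Fin 3 → R) :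
    zornDerOf (c • A) (c • u) (c • v) = c • zornDerOf A u v := by
  refine LinearMap.ext fun X => ?_
  simp only [zornDerOf, LinearMap.coe_mk, AddHom.coe_mk, LinearMap.smul_apply, Prod.smul_mk,
    smul_dotProduct, smul_mulVec, vecMul_smul, _root_.map_smul]
  congr 2 <;> module

lemma derMatrix_zornDerOf (A : Matrix (Fin 3) (Fin 3) R) (u v : Fin 3 → R) :
    derMatrix (zornDerOf A u v) = A := by
  ext i j
  simp [derMatrix, zornDerOf_zC]

lemma zmul_zA_left (X : Zorn R) : zmul zA X = ((X.1.1, X.1.2), (0, 0)) := by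
  simp [zmul, zA]

lemma zmul_zA_right (X : Zorn R) : zmul X zA = ((X.1.1, 0), (X.2.1, 0)) := by
  simp [zmul, zA]

lemma zmul_zC_left (j : Fin 3) (X : Zorn R) :
    zmul (zC j) X = ((X.2.1 j, X.2.2 • Pi.single j 1), (Pi.single j 1 ⨯₃ X.1.2, 0)) := by
  simp [zmul, zC, single_dotProduct]

lemma zmul_zC_right (j : Fin 3) (X : Zorn R) :
    zmul X (zC j) = ((0, X.1.1 • Pi.single j 1), (X.1.2 ⨯₃ Pi.single j 1, X.2.1 j)) := by
  simp [zmul, zC, dotProduct_single]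

lemma zmul_zD_right (j : Fin 3) (X : Zorn R) :
    zmul X (zD j) = ((X.1.2 j, -(X.2.1 ⨯₃ Pi.single j 1)), (X.2.2 • Pi.single j 1, 0)) := by
  simp [zmul, zD, dotProduct_single]

lemma zmul_zA_zA : zmul (zA : Zorn R) zA = zA := by
  simp [zmul, zA]

lemma zmul_zA_zC (j : Fin 3) : zmul (zA : Zorn R) (zC j) = zC j := by
  simp [zmul, zA, zC]

lemma zmul_zC_zA (j : Fin 3) : zmul (zC j : Zorn R) zA = 0 := by
  simp [zmul, zA, zC]

lemma zmul_zC_zD_self (j : Fin 3) : zmul (zC j : Zorn R) (zD j) = zA := by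
  simp [zmul, zC, zD, zA]

lemma zmul_zC_add_one_zC_add_two (k : Fin 3) :
    zmul (zC (k + 1) : Zorn R) (zC (k + 2)) = zD k := by
  fin_cases k <;> simp [zmul, zC, zD, cross_apply] <;>
    (ext i; fin_cases i <;> simp)

lemma zero_zmul (X : Zorn R) : zmul 0 X = 0 := by
  simp [zmul]

lemma zmul_zero (X : Zorn R) : zmul X 0 = 0 := by
  simp [zmul]

lemma zornOne_zmul (X : Zorn R) : zmul zornOne X = X := by
  simp [zmul, zornOne]

lemma zmul_zornOne (X : Zorn R) : zmul X zornOne = X := by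
  simp [zmul, zornOne]

lemma zB_eq_zornOne_sub_zA : (zB : Zorn R) = zornOne - zA := by
  simp [zB, zornOne, zA]

lemma zorn_eq_sum (X : Zorn R) :
    X = X.1.1 • zA + X.2.2 • zB + ∑ j, X.1.2 j • zC j + ∑ j, X.2.1 j • zD j := by
  ext <;> simp [zA, zB, zC, zD, Prod.fst_sum, Prod.snd_sum, Pi.single_apply]

variable {d : Zorn R →ₗ[R] Zorn R}

lemma IsZornDeriv.apply_zA (hd : IsZornDeriv d) :
    d zA = ((0, (d zA).1.2), ((d zA).2.1, 0)) := by
  have h := hd zA zA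
  rw [zmul_zA_zA, zmul_zA_left, zmul_zA_right] at h
  obtain ⟨h₁, h₂⟩ : (d zA).1.1 = 0 ∧ (d zA).2.2 = 0 := by
    simpa [Prod.ext_iff] using h
  exact Prod.ext (Prod.ext h₁ rfl) (Prod.ext rfl h₂)

lemma IsZornDeriv.apply_zC (hd : IsZornDeriv d) (j : Fin 3) :
    d (zC j) =
      ((-(d zA).2.1 j, (derMatrix d).col j), ((d zA).1.2 ⨯₃ Pi.single j 1, (d zA).2.1 j)) := by
  have hAC := hd zA (zC j)
  have hCA := hd (zC j) zA
  rw [zmul_zA_zC, zmul_zA_left, zmul_zC_right] at hAC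
  rw [zmul_zC_zA, map_zero, zmul_zA_right, zmul_zC_left] at hCA
  simp only [Prod.ext_iff, Prod.fst_add, Prod.snd_add, Prod.fst_zero, Prod.snd_zero,
    add_zero, zero_add] at hAC hCA
  exact Prod.ext (Prod.ext (eq_neg_of_add_eq_zero_left hCA.1.1.symm) rfl)
    (Prod.ext hAC.2.1 hAC.2.2)

lemma IsZornDeriv.apply_zornOne (hd : IsZornDeriv d) : d zornOne = 0 := by
  have h := hd zornOne zornOne
  rw [zornOne_zmul, zmul_zornOne, zornOne_zmul] at h
  exact left_eq_add.mp h

lemma IsZornDeriv.eq_zero_of_apply_zA_of_apply_zC (hd : IsZornDeriv d) (hA : d zA = 0)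
    (hC : ∀ j, d (zC j) = 0) : d = 0 := by
  have hB : d zB = 0 := by rw [zB_eq_zornOne_sub_zA, map_sub, hd.apply_zornOne, hA, sub_zero]
  have hD (k : Fin 3) : d (zD k) = 0 := by
    rw [← zmul_zC_add_one_zC_add_two, hd, hC, hC, zero_zmul, zmul_zero, add_zero]
  refine LinearMap.ext fun X => ?_
  rw [zorn_eq_sum X]
  simp [map_sum, hA, hB, hC, hD]

lemma IsZornDeriv.trace_derMatrix (hd : IsZornDeriv d) : (derMatrix d).trace = 0 := by
  have h₁ : (d (zC 2)).1.2 2 + (d (zD 2)).2.1 2 = 0 := by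
    have h := congrArg (·.1.1) (hd (zC 2) (zD 2))
    rw [zmul_zC_zD_self, hd.apply_zA, zmul_zD_right, zmul_zC_left] at h
    simpa using h.symm
  have h₂ : (d (zD 2)).2.1 2 = (d (zC 0)).1.2 0 + (d (zC 1)).1.2 1 := by
    have h := congrArg (·.2.1 2) (hd (zC 0) (zC 1))
    rw [show zmul (zC 0 : Zorn R) (zC 1) = zD 2 from zmul_zC_add_one_zC_add_two 2,
      zmul_zC_left, zmul_zC_right] at h
    simpa [cross_apply] using h
  rw [trace_fin_three]
  simp only [derMatrix, of_apply]
  linear_combination h₁ - h₂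

lemma IsZornDeriv.eq_zornDerOf (hd : IsZornDeriv d) :
    d = zornDerOf (derMatrix d) (d zA).1.2 (d zA).2.1 := by
  rw [← sub_eq_zero]
  have hE : IsZornDeriv (d - zornDerOf (derMatrix d) (d zA).1.2 (d zA).2.1) :=
    (ZornDer R).sub_mem hd (isZornDeriv_zornDerOf hd.trace_derMatrix _ _)
  refine hE.eq_zero_of_apply_zA_of_apply_zC ?_ fun j => ?_
  · exact sub_eq_zero.mpr (hd.apply_zA.trans (zornDerOf_zA _ _ _).symm)
  · exact sub_eq_zero.mpr ((hd.apply_zC j).trans (zornDerOf_zC _ _ _ j).symm)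

lemma finrank_ker_traceLinearMap_add_one {K n : Type*} [Field K] [Fintype n] [DecidableEq n]
    [Nonempty n] :
    Module.finrank K (LinearMap.ker (traceLinearMap n K K)) + 1 =
      Fintype.card n * Fintype.card n := by
  have hsurj : LinearMap.range (traceLinearMap n K K) = ⊤ :=
    LinearMap.range_eq_top.mpr fun c =>
      ⟨Matrix.single (Classical.arbitrary n) (Classical.arbitrary n) c, trace_single_eq_same _ c⟩
  have := LinearMap.finrank_range_add_finrank_ker (traceLinearMap n K K)
  rw [hsurj, finrank_top, Module.finrank_self, Module.finrank_matrix, Module.finrank_self] at this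
  omega

variable (R) in
def zornDerEquiv :
    (LinearMap.ker (traceLinearMap (Fin 3) R R) × (Fin 3 → R) × (Fin 3 → R)) ≃ₗ[R] ZornDer R where
  toFun p := ⟨zornDerOf p.1 p.2.1 p.2.2, isZornDeriv_zornDerOf p.1.2 _ _⟩
  map_add' p q := Subtype.ext (zornDerOf_add _ _ _ _ _ _)
  map_smul' c p := Subtype.ext (zornDerOf_smul _ _ _ _)
  invFun d := (⟨derMatrix d, d.2.trace_derMatrix⟩, (d.1 zA).1.2, (d.1 zA).2.1)
  left_inv p := by
    ext1
    · exact Subtype.ext (derMatrix_zornDerOf _ _ _)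
    · simp [zornDerOf_zA]
  right_inv d := Subtype.ext d.2.eq_zornDerOf.symm

theorem finrank_zorn_der_general {F : Type*} [Field F] :
    Module.finrank F (ZornDer F) = 14 := by
  have h8 := finrank_ker_traceLinearMap_add_one (K := F) (n := Fin 3)
  rw [Fintype.card_fin] at h8
  rw [← (zornDerEquiv F).finrank_eq, Module.finrank_prod, Module.finrank_prod,
    Module.finrank_fin_fun]
  omega

theorem finrank_zorn_der {F : Type*} [Field F] (h2 : (2 : F) ≠ 0) (h3 : (3 : F) ≠ 0) :
    Module.finrank F (ZornDer F) = 14 :=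
  finrank_zorn_der_general
end

section
/- For each of the 14 parameter choices setting one parameter to 1 and the others to 0 in the generic derivation matrix of the Zorn algebra, the resulting 8×8 matrix defines a derivation of the Zorn algebra; these 14 matrices are linearly independent. -/
open Matrix

variable {R : Type*} [CommRing R]

def coorL : Zorn R →ₗ[R] (Fin 8 → R) where
  toFun X := ![X.1.1, X.2.2, X.1.2 0, X.1.2 1, X.1.2 2, X.2.1 0, X.2.1 1, X.2.1 2]
  map_add' X Y := by funext i; fin_cases i <;> rfl
  map_smul' c X := by funext i; fin_cases i <;> rfl

def zornL : (Fin 8 → R) →ₗ[R] Zorn R where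
  toFun c := ((c 0, ![c 2, c 3, c 4]), (![c 5, c 6, c 7], c 1))
  map_add' x y := by
    refine Prod.ext (Prod.ext rfl ?_) (Prod.ext ?_ rfl) <;>
      (funext i; fin_cases i <;> rfl)
  map_smul' c x := by
    refine Prod.ext (Prod.ext rfl ?_) (Prod.ext ?_ rfl) <;>
      (funext i; fin_cases i <;> rfl)

def genM (u v : Fin 3 → R) (w : Matrix (Fin 3) (Fin 3) R) : Matrix (Fin 8) (Fin 8) R :=
  !![0,0,u 0,u 1,u 2,v 0,v 1,v 2;
     0,0,-u 0,-u 1,-u 2,-v 0,-v 1,-v 2;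
     -v 0,v 0,w 0 0,w 0 1,w 0 2,0,u 2,-u 1;
     -v 1,v 1,w 1 0,w 1 1,w 1 2,-u 2,0,u 0;
     -v 2,v 2,w 2 0,w 2 1,-w 0 0 - w 1 1,u 1,-u 0,0;
     -u 0,u 0,0,v 2,-v 1,-w 0 0,-w 1 0,-w 2 0;
     -u 1,u 1,-v 2,0,v 0,-w 0 1,-w 1 1,-w 2 1;
     -u 2,u 2,v 1,-v 0,0,-w 0 2,-w 1 2,w 0 0 + w 1 1]

def paramM (p : Fin 14 → R) : Matrix (Fin 8) (Fin 8) R :=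
  genM ![p 0, p 1, p 2] ![p 11, p 12, p 13]
    !![p 3, p 4, p 5; p 6, p 7, p 8; p 9, p 10, -(p 3 + p 7)]

def derOf (p : Fin 14 → R) : Zorn R →ₗ[R] Zorn R :=
  zornL ∘ₗ (paramM p).vecMulLinear ∘ₗ coorL

section Aux
variable {α : Type*} (a b c d e f g h : α)
lemma v8_0 : ![a,b,c,d,e,f,g,h] 0 = a := rfl
lemma v8_1 : ![a,b,c,d,e,f,g,h] 1 = b := rfl
lemma v8_2 : ![a,b,c,d,e,f,g,h] 2 = c := rfl
lemma v8_3 : ![a,b,c,d,e,f,g,h] 3 = d := rfl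
lemma v8_4 : ![a,b,c,d,e,f,g,h] 4 = e := rfl
lemma v8_5 : ![a,b,c,d,e,f,g,h] 5 = f := rfl
lemma v8_6 : ![a,b,c,d,e,f,g,h] 6 = g := rfl
lemma v8_7 : ![a,b,c,d,e,f,g,h] 7 = h := rfl
lemma v3_0 : ![a,b,c] 0 = a := rfl
lemma v3_1 : ![a,b,c] 1 = b := rfl
lemma v3_2 : ![a,b,c] 2 = c := rfl
lemma f3_1 : Fin.succ (0 : Fin 2) = (1 : Fin 3) := rfl
lemma f3_2 : Fin.succ (1 : Fin 2) = (2 : Fin 3) := rfl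
lemma fm0 (h : 0 < 3) : (⟨0, h⟩ : Fin 3) = 0 := rfl
lemma fm1 (h : 1 < 3) : (⟨1, h⟩ : Fin 3) = 1 := rfl
lemma fm2 (h : 2 < 3) : (⟨2, h⟩ : Fin 3) = 2 := rfl
end Aux

set_option maxHeartbeats 4000000 in
theorem derOf_isDeriv (p : Fin 14 → R) : IsZornDeriv (derOf p) := by
  intro X Y
  obtain ⟨⟨a1, c1⟩, e1, b1⟩ := X
  obtain ⟨⟨a2, c2⟩, e2, b2⟩ := Y
  refine Prod.ext (Prod.ext ?_ ?_) (Prod.ext ?_ ?_)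
  all_goals try funext i
  all_goals try fin_cases i
  all_goals simp only [derOf, zmul, cross_apply, LinearMap.comp_apply, coorL, zornL,
      Matrix.vecMulLinear_apply, LinearMap.coe_mk, AddHom.coe_mk, paramM, genM,
      Matrix.vecMul, dotProduct, Fin.sum_univ_succ, Fin.sum_univ_zero,
      Matrix.of_apply, smul_eq_mul, Pi.smul_apply, Pi.sub_apply, Pi.add_apply,
      Prod.fst_add, Prod.snd_add, Fin.isValue, f3_1, f3_2, Fin.succ_zero_eq_one,
      Matrix.cons_val', Matrix.cons_val_zero, Matrix.cons_val_one, Matrix.head_cons,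
      Matrix.empty_val', Matrix.cons_val_fin_one, Matrix.cons_val_succ,
      Matrix.cons_val_zero', Matrix.cons_val_succ', fm0, fm1, fm2,
      v8_0, v8_1, v8_2, v8_3, v8_4, v8_5, v8_6, v8_7, v3_0, v3_1, v3_2,
      Matrix.cons_val_two, Matrix.vecHead, Matrix.vecTail, Function.comp_apply,
      add_zero, zero_add]
  all_goals ring


theorem basis_derivations_and_independence {F : Type*} [Field F] :
    (∀ k : Fin 14, IsZornDeriv (derOf (Pi.single k (1 : F)))) ∧
    LinearIndependent F (fun k : Fin 14 => paramM (Pi.single k (1 : F))) := by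
  refine ⟨fun k => derOf_isDeriv _, ?_⟩
  rw [Fintype.linearIndependent_iff]
  intro g hg
  have key : ∀ i j : Fin 8, (∑ k, g k * paramM (Pi.single k (1:F)) i j) = 0 := by
    intro i j
    have h2 := congrFun (congrFun hg i) j
    simpa [Matrix.sum_apply] using h2
  intro k
  fin_cases k
  · simpa [paramM, genM, Matrix.cons_val', Matrix.cons_val_zero, Matrix.cons_val_one,
      Matrix.head_cons, Matrix.empty_val', Matrix.cons_val_fin_one, Matrix.of_apply,
      v8_0, v8_1, v8_2, v8_3, v8_4, v8_5, v8_6, v8_7, v3_0, v3_1, v3_2,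
      Pi.single_apply, mul_ite, mul_one, mul_zero,
      Finset.sum_ite_eq, Finset.sum_ite_eq'] using key 0 2
  · simpa [paramM, genM, Matrix.cons_val', Matrix.cons_val_zero, Matrix.cons_val_one,
      Matrix.head_cons, Matrix.empty_val', Matrix.cons_val_fin_one, Matrix.of_apply,
      v8_0, v8_1, v8_2, v8_3, v8_4, v8_5, v8_6, v8_7, v3_0, v3_1, v3_2,
      Pi.single_apply, mul_ite, mul_one, mul_zero,
      Finset.sum_ite_eq, Finset.sum_ite_eq'] using key 0 3
  · simpa [paramM, genM, Matrix.cons_val', Matrix.cons_val_zero, Matrix.cons_val_one,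
      Matrix.head_cons, Matrix.empty_val', Matrix.cons_val_fin_one, Matrix.of_apply,
      v8_0, v8_1, v8_2, v8_3, v8_4, v8_5, v8_6, v8_7, v3_0, v3_1, v3_2,
      Pi.single_apply, mul_ite, mul_one, mul_zero,
      Finset.sum_ite_eq, Finset.sum_ite_eq'] using key 0 4
  · simpa [paramM, genM, Matrix.cons_val', Matrix.cons_val_zero, Matrix.cons_val_one,
      Matrix.head_cons, Matrix.empty_val', Matrix.cons_val_fin_one, Matrix.of_apply,
      v8_0, v8_1, v8_2, v8_3, v8_4, v8_5, v8_6, v8_7, v3_0, v3_1, v3_2,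
      Pi.single_apply, mul_ite, mul_one, mul_zero,
      Finset.sum_ite_eq, Finset.sum_ite_eq'] using key 2 2
  · simpa [paramM, genM, Matrix.cons_val', Matrix.cons_val_zero, Matrix.cons_val_one,
      Matrix.head_cons, Matrix.empty_val', Matrix.cons_val_fin_one, Matrix.of_apply,
      v8_0, v8_1, v8_2, v8_3, v8_4, v8_5, v8_6, v8_7, v3_0, v3_1, v3_2,
      Pi.single_apply, mul_ite, mul_one, mul_zero,
      Finset.sum_ite_eq, Finset.sum_ite_eq'] using key 2 3
  · simpa [paramM, genM, Matrix.cons_val', Matrix.cons_val_zero, Matrix.cons_val_one,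
      Matrix.head_cons, Matrix.empty_val', Matrix.cons_val_fin_one, Matrix.of_apply,
      v8_0, v8_1, v8_2, v8_3, v8_4, v8_5, v8_6, v8_7, v3_0, v3_1, v3_2,
      Pi.single_apply, mul_ite, mul_one, mul_zero,
      Finset.sum_ite_eq, Finset.sum_ite_eq'] using key 2 4
  · simpa [paramM, genM, Matrix.cons_val', Matrix.cons_val_zero, Matrix.cons_val_one,
      Matrix.head_cons, Matrix.empty_val', Matrix.cons_val_fin_one, Matrix.of_apply,
      v8_0, v8_1, v8_2, v8_3, v8_4, v8_5, v8_6, v8_7, v3_0, v3_1, v3_2,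
      Pi.single_apply, mul_ite, mul_one, mul_zero,
      Finset.sum_ite_eq, Finset.sum_ite_eq'] using key 3 2
  · simpa [paramM, genM, Matrix.cons_val', Matrix.cons_val_zero, Matrix.cons_val_one,
      Matrix.head_cons, Matrix.empty_val', Matrix.cons_val_fin_one, Matrix.of_apply,
      v8_0, v8_1, v8_2, v8_3, v8_4, v8_5, v8_6, v8_7, v3_0, v3_1, v3_2,
      Pi.single_apply, mul_ite, mul_one, mul_zero,
      Finset.sum_ite_eq, Finset.sum_ite_eq'] using key 3 3
  · simpa [paramM, genM, Matrix.cons_val', Matrix.cons_val_zero, Matrix.cons_val_one,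
      Matrix.head_cons, Matrix.empty_val', Matrix.cons_val_fin_one, Matrix.of_apply,
      v8_0, v8_1, v8_2, v8_3, v8_4, v8_5, v8_6, v8_7, v3_0, v3_1, v3_2,
      Pi.single_apply, mul_ite, mul_one, mul_zero,
      Finset.sum_ite_eq, Finset.sum_ite_eq'] using key 3 4
  · simpa [paramM, genM, Matrix.cons_val', Matrix.cons_val_zero, Matrix.cons_val_one,
      Matrix.head_cons, Matrix.empty_val', Matrix.cons_val_fin_one, Matrix.of_apply,
      v8_0, v8_1, v8_2, v8_3, v8_4, v8_5, v8_6, v8_7, v3_0, v3_1, v3_2,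
      Pi.single_apply, mul_ite, mul_one, mul_zero,
      Finset.sum_ite_eq, Finset.sum_ite_eq'] using key 4 2
  · simpa [paramM, genM, Matrix.cons_val', Matrix.cons_val_zero, Matrix.cons_val_one,
      Matrix.head_cons, Matrix.empty_val', Matrix.cons_val_fin_one, Matrix.of_apply,
      v8_0, v8_1, v8_2, v8_3, v8_4, v8_5, v8_6, v8_7, v3_0, v3_1, v3_2,
      Pi.single_apply, mul_ite, mul_one, mul_zero,
      Finset.sum_ite_eq, Finset.sum_ite_eq'] using key 4 3
  · simpa [paramM, genM, Matrix.cons_val', Matrix.cons_val_zero, Matrix.cons_val_one,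
      Matrix.head_cons, Matrix.empty_val', Matrix.cons_val_fin_one, Matrix.of_apply,
      v8_0, v8_1, v8_2, v8_3, v8_4, v8_5, v8_6, v8_7, v3_0, v3_1, v3_2,
      Pi.single_apply, mul_ite, mul_one, mul_zero,
      Finset.sum_ite_eq, Finset.sum_ite_eq'] using key 0 5
  · simpa [paramM, genM, Matrix.cons_val', Matrix.cons_val_zero, Matrix.cons_val_one,
      Matrix.head_cons, Matrix.empty_val', Matrix.cons_val_fin_one, Matrix.of_apply,
      v8_0, v8_1, v8_2, v8_3, v8_4, v8_5, v8_6, v8_7, v3_0, v3_1, v3_2,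
      Pi.single_apply, mul_ite, mul_one, mul_zero,
      Finset.sum_ite_eq, Finset.sum_ite_eq'] using key 0 6
  · simpa [paramM, genM, Matrix.cons_val', Matrix.cons_val_zero, Matrix.cons_val_one,
      Matrix.head_cons, Matrix.empty_val', Matrix.cons_val_fin_one, Matrix.of_apply,
      v8_0, v8_1, v8_2, v8_3, v8_4, v8_5, v8_6, v8_7, v3_0, v3_1, v3_2,
      Pi.single_apply, mul_ite, mul_one, mul_zero,
      Finset.sum_ite_eq, Finset.sum_ite_eq'] using key 0 7
end

section
/- The 8×8 matrix M(u,v,w) with rows (0,0,u₁,u₂,u₃,v₁,v₂,v₃), (0,0,−u₁,−u₂,−u₃,−v₁,−v₂,−v₃), (−v₁,v₁,w₁₁,w₁₂,w₁₃,0,u₃,−u₂), (−v₂,v₂,w₂₁,w₂₂,w₂₃,−u₃,0,u₁), (−v₃,v₃,w₃₁,w₃₂,−w₁₁−w₂₂,u₂,−u₁,0), (−u₁,u₁,0,v₃,−v₂,−w₁₁,−w₂₁,−w₃₁), (−u₂,u₂,−v₃,0,v₁,−w₁₂,−w₂₂,−w₃₂), (−u₃,u₃,v₂,−v₁,0,−w₁₃,−w₂₃,w₁₁+w₂₂),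 acting on coordinates with respect to the basis (A,B,C₁,C₂,C₃,D₁,D₂,D₃) of the Zorn algebra, defines a derivation for all u,v ∈ F³ and all 3×3 matrices w with the displayed trace constraint. -/
open Matrix

variable {R : Type*} [CommRing R]

lemma vh0 {α : Type*} (f : Fin 3 → α) : Matrix.vecHead f = f 0 := rfl
lemma vh1 {α : Type*} (f : Fin 3 → α) : Matrix.vecHead (Matrix.vecTail f) = f 1 := rfl
lemma vh2 {α : Type*} (f : Fin 3 → α) :
    Matrix.vecHead (Matrix.vecTail (Matrix.vecTail f)) = f 2 := rfl

lemma cv2 {α : Type*} (a0 a1 a2 a3 a4 a5 a6 a7 : α) :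
    ![a0,a1,a2,a3,a4,a5,a6,a7] 2 = a2 := rfl
lemma cv3 {α : Type*} (a0 a1 a2 a3 a4 a5 a6 a7 : α) :
    ![a0,a1,a2,a3,a4,a5,a6,a7] 3 = a3 := rfl
lemma cv4 {α : Type*} (a0 a1 a2 a3 a4 a5 a6 a7 : α) :
    ![a0,a1,a2,a3,a4,a5,a6,a7] 4 = a4 := rfl
lemma cv5 {α : Type*} (a0 a1 a2 a3 a4 a5 a6 a7 : α) :
    ![a0,a1,a2,a3,a4,a5,a6,a7] 5 = a5 := rfl
lemma cv6 {α : Type*} (a0 a1 a2 a3 a4 a5 a6 a7 : α) :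
    ![a0,a1,a2,a3,a4,a5,a6,a7] 6 = a6 := rfl
lemma cv7 {α : Type*} (a0 a1 a2 a3 a4 a5 a6 a7 : α) :
    ![a0,a1,a2,a3,a4,a5,a6,a7] 7 = a7 := rfl

set_option maxHeartbeats 1000000 in
lemma derApply {F : Type*} [Field F] (u v : Fin 3 → F) (w : Matrix (Fin 3) (Fin 3) F)
    (X : Zorn F) :
    (zornL ∘ₗ (genM u v w).vecMulLinear ∘ₗ coorL) X =
      ((-(X.1.2 0 * v 0 + X.1.2 1 * v 1 + X.1.2 2 * v 2)
          - (X.2.1 0 * u 0 + X.2.1 1 * u 1 + X.2.1 2 * u 2),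
        ![X.1.1 * u 0 - X.2.2 * u 0 + X.1.2 0 * w 0 0 + X.1.2 1 * w 1 0 + X.1.2 2 * w 2 0
            - X.2.1 1 * v 2 + X.2.1 2 * v 1,
          X.1.1 * u 1 - X.2.2 * u 1 + X.1.2 0 * w 0 1 + X.1.2 1 * w 1 1 + X.1.2 2 * w 2 1
            + X.2.1 0 * v 2 - X.2.1 2 * v 0,
          X.1.1 * u 2 - X.2.2 * u 2 + X.1.2 0 * w 0 2 + X.1.2 1 * w 1 2
            + X.1.2 2 * (-(w 0 0) - w 1 1) - X.2.1 0 * v 1 + X.2.1 1 * v 0]),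
       (![X.1.1 * v 0 - X.2.2 * v 0 - X.1.2 1 * u 2 + X.1.2 2 * u 1
            - X.2.1 0 * w 0 0 - X.2.1 1 * w 0 1 - X.2.1 2 * w 0 2,
          X.1.1 * v 1 - X.2.2 * v 1 + X.1.2 0 * u 2 - X.1.2 2 * u 0
            - X.2.1 0 * w 1 0 - X.2.1 1 * w 1 1 - X.2.1 2 * w 1 2,
          X.1.1 * v 2 - X.2.2 * v 2 - X.1.2 0 * u 1 + X.1.2 1 * u 0
            - X.2.1 0 * w 2 0 - X.2.1 1 * w 2 1 + X.2.1 2 * (w 0 0 + w 1 1)],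
        X.1.2 0 * v 0 + X.1.2 1 * v 1 + X.1.2 2 * v 2
          + (X.2.1 0 * u 0 + X.2.1 1 * u 1 + X.2.1 2 * u 2))) := by
  refine Prod.ext (Prod.ext ?_ ?_) (Prod.ext ?_ ?_) <;>
    [skip; funext i; funext i; skip] <;>
    [skip; fin_cases i; fin_cases i; skip] <;>
    · simp [zornL, coorL, genM, Matrix.vecMulLinear, Matrix.vecMul, dotProduct,
        Fin.sum_univ_succ, cv2, cv3, cv4, cv5, cv6, cv7]
      ring

set_option maxHeartbeats 4000000 in
theorem generic_matrix_is_derivation {F : Type*} [Field F]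
    (u v : Fin 3 → F) (w : Matrix (Fin 3) (Fin 3) F)
    (hw : w 2 2 = -(w 0 0 + w 1 1)) :
    IsZornDeriv (zornL ∘ₗ (genM u v w).vecMulLinear ∘ₗ coorL) := by
  intro X Y
  obtain ⟨⟨a, b⟩, c, e⟩ := X
  obtain ⟨⟨a', b'⟩, c', e'⟩ := Y
  rw [derApply, derApply, derApply]
  refine Prod.ext (Prod.ext ?_ ?_) (Prod.ext ?_ ?_) <;>
    [skip; funext i; funext i; skip] <;>
    [skip; fin_cases i; fin_cases i; skip] <;>
    · simp [zmul, crossProduct, dotProduct, Fin.sum_univ_succ, vh2, vh1, vh0,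
        Pi.smul_apply, smul_eq_mul]
      ring
end

section
/- In the derivation algebra of the Zorn algebra with basis x₁,…,x₁₄ (obtained by setting each of the 14 parameters of the generic derivation matrix to 1 and the rest to 0), one has [x₁, x₂] = −2x₁₄, [x₁, x₃] = 2x₁₃, and [x₂, x₃] = −2x₁₂. -/
open Matrix

variable {R : Type*} [CommRing R]

/-! The `u`-block of the generic derivation brackets into the `v`-block through the cross
product, `⁅genM u 0 0, genM u' 0 0⁆ = genM 0 (-2 • u ⨯₃ u') 0`; the three entries then come from
`e₁ ⨯₃ e₂ = e₃`, `e₁ ⨯₃ e₃ = -e₂` and `e₂ ⨯₃ e₃ = e₁`. -/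

theorem smul_genM (c : R) (u v : Fin 3 → R) (w : Matrix (Fin 3) (Fin 3) R) :
    c • genM u v w = genM (c • u) (c • v) (c • w) := by
  ext i j
  fin_cases i <;> fin_cases j <;> simp [genM] <;> ring

theorem lie_genM_zero_zero (u u' : Fin 3 → R) :
    ⁅genM u 0 0, genM u' 0 0⁆ = genM 0 (-(2 : R) • u ⨯₃ u') 0 := by
  rw [Ring.lie_def, genM, genM, genM]
  simp [cons_mul, vecMul_cons, cross_apply, funext_iff, Fin.forall_fin_succ]
  and_intros <;> ring

theorem multiplication_table_entries {F : Type*} [Field F] :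
    (paramM (Pi.single 0 (1 : F))) * (paramM (Pi.single 1 1)) -
      (paramM (Pi.single 1 1)) * (paramM (Pi.single 0 1)) =
        (-2 : F) • paramM (Pi.single 13 1) ∧
    (paramM (Pi.single 0 (1 : F))) * (paramM (Pi.single 2 1)) -
      (paramM (Pi.single 2 1)) * (paramM (Pi.single 0 1)) =
        (2 : F) • paramM (Pi.single 12 1) ∧
    (paramM (Pi.single 1 (1 : F))) * (paramM (Pi.single 2 1)) -
      (paramM (Pi.single 2 1)) * (paramM (Pi.single 1 1)) =
        (-2 : F) • paramM (Pi.single 11 1) := by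
  have x₁ : paramM (Pi.single 0 (1 : F)) = genM ![1, 0, 0] 0 0 := by simp [paramM, ← zero_empty]
  have x₂ : paramM (Pi.single 1 (1 : F)) = genM ![0, 1, 0] 0 0 := by simp [paramM, ← zero_empty]
  have x₃ : paramM (Pi.single 2 (1 : F)) = genM ![0, 0, 1] 0 0 := by simp [paramM, ← zero_empty]
  have x₁₂ : paramM (Pi.single 11 (1 : F)) = genM 0 ![1, 0, 0] 0 := by simp [paramM, ← zero_empty]
  have x₁₃ : paramM (Pi.single 12 (1 : F)) = genM 0 ![0, 1, 0] 0 := by simp [paramM, ← zero_empty]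
  have x₁₄ : paramM (Pi.single 13 (1 : F)) = genM 0 ![0, 0, 1] 0 := by simp [paramM, ← zero_empty]
  simp only [← Ring.lie_def, x₁, x₂, x₃, x₁₂, x₁₃, x₁₄, lie_genM_zero_zero, smul_genM, smul_zero]
  simp [cross_apply]
end

section
/- For any derivation d of the Zorn algebra, the matrix of d restricted to span{D₁,D₂,D₃} in terms of its restriction to span{C₁,C₂,C₃} is determined: if d(C_j) ≡ Σ_i w_{ji} C_i modulo span{A,B,D₁,D₂,D₃} with Σ_i w_{ii} = 0, then d(D_j) ≡ −Σ_i w_{ij} D_i modulo span{A,B,C₁,C₂,C₃}. -/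
open Matrix

variable {R : Type*} [CommRing R]

theorem deriv_D_block_negative_transpose {F : Type*} [Field F]
    (d : Zorn F →ₗ[F] Zorn F) (hd : IsZornDeriv d)
    (w : Matrix (Fin 3) (Fin 3) F)
    (hw : ∀ j i : Fin 3, (d (zC j)).1.2 i = w j i)
    (htr : ∑ i, w i i = 0) :
    ∀ j i : Fin 3, (d (zD j)).2.1 i = -w i j := by
  -- First: the A-component of d(zA) vanishes, since zA is idempotent.
  have hAA : zmul (zA : Zorn F) zA = zA := by
    simp [zmul, zA]
  have hA1 : (d (zA : Zorn F)).1.1 = 0 := by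
    have h := hd zA zA
    rw [hAA] at h
    have h1 := congrArg (fun X : Zorn F => X.1.1) h
    simp [zmul, zA] at h1
    simpa [zA] using h1
  intro j i
  -- C_i * D_j = δ_{ij} • zA
  have hCD : zmul (zC i : Zorn F) (zD j) = (Pi.single i (1:F) ⬝ᵥ Pi.single j 1) • zA := by
    simp [zmul, zC, zD, zA, Prod.smul_def, smul_eq_mul]
  have h := hd (zC i) (zD j)
  rw [hCD, LinearMap.map_smul] at h
  have h1 := congrArg (fun X : Zorn F => X.1.1) h
  simp [zmul, zC, zD, hA1, smul_eq_mul] at h1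
  -- h1 : 0 = (d (zC i)).1.2 ⬝ᵥ Pi.single j 1 + Pi.single i 1 ⬝ᵥ (d (zD j)).2.1
  have h1' : (0:F) = w i j + (d (zD j)).2.1 i := by rw [← hw i j]; exact h1
  linear_combination -h1'
end
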